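/- Let a, b be positive integers, let (U_n) be a non-degenerate linear recurrence sequence of integers of order k ≥ 2 whose first coefficient f₁ is a nonzero constant η₁ and which has dominant root α₁, let ε > 0 and r ≥ 1, and order the roots so that |α₂| = max_{2≤j≤t}|α_j|. Then there exists an (effectively computable) constant c₁₂, depending only on ε, γ, k, r, a, b, such that for every (n, m, z₁,…,z_r) with n ≥ m ≥ 1, z₁,…,z_r ∈ 𝒰_S, aU_n + bU_m = z₁ + ⋯ + z_r, |z_i|^{1+ε} ≤ |z_r| for 1 ≤ i ≤ r−1, and |aU_n + bU_m| > (1/2)|η₁|α₁ⁿ, one has |a·η₁·α₁ⁿ·z_r^{−1} − 1| < c₁₂·n^{k−1}·M^{n−m}, where M = max(1/α₁, α₁^{−ε/(1+ε)}, |α₂|/α₁). -/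

import Mathlib

open scoped BigOperators

/-- `z` is an `S`-unit for the finite set of primes `p 0, …, p (L-1)`:
`z = ± p₁^{e₁} ⋯ p_L^{e_L}` with nonnegative integer exponents. -/
def IsSUnit {L : ℕ} (p : Fin L → ℕ) (z : ℤ) : Prop :=
  ∃ (e : Fin L → ℕ) (s : ℤ), (s = 1 ∨ s = -1) ∧ z = s * ∏ i, (p i : ℤ) ^ e i

/-!
Write `U n = η A^n + R n`. The other roots have modulus at most `B = |α₂|` and the coefficient
polynomials have degree `< k`, so `‖R n‖ ≪ n^(k-1) B^n`. Put `Z = |z_r|`. Integrality turns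
`|z_i|^(1+ε) ≤ Z` into `|z_i| ≤ Z`, so `|a U n + b U m| ≤ r Z` and `Z ≫ A^n`; it also gives
`|z_i| ≤ Z^(1/(1+ε))`. Hence the identity `a η A^n - z_r = ∑_{i<r} z_i - b U m - a R n` bounds
`|a η A^n - z_r| / Z` by `Z^(-ε/(1+ε)) + n^(k-1) (A^m + B^n) / A^n`, up to constants, and each of
`(A^(-ε/(1+ε)))^n`, `(1/A)^(n-m)`, `(B/A)^n` is at most `M^(n-m)`.
-/

section

open Polynomial Finset

theorem Polynomial.exists_norm_eval_natCast_le {𝕜 : Type*} [RCLike 𝕜] (q : 𝕜[X]) {d : ℕ}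
    (hd : q.natDegree ≤ d) :
    ∃ C : ℝ, 0 ≤ C ∧ ∀ N : ℕ, 1 ≤ N → ‖q.eval (N : 𝕜)‖ ≤ C * (N : ℝ) ^ d := by
  refine ⟨∑ j ∈ range (q.natDegree + 1), ‖q.coeff j‖, sum_nonneg fun j _ => norm_nonneg _,
    fun N hN => ?_⟩
  rw [eval_eq_sum_range, sum_mul]
  refine (norm_sum_le _ _).trans (sum_le_sum fun j hj => ?_)
  rw [norm_mul, norm_pow, RCLike.norm_natCast]
  gcongr
  · exact_mod_cast hN
  · have := mem_range.mp hj; omega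

theorem Polynomial.natDegree_X_pow_sub_sum_C_mul_X_pow {R : Type*} [Ring R] [Nontrivial R]
    (k : ℕ) (c : Fin k → R) :
    (X ^ k - ∑ i : Fin k, C (c i) * X ^ (k - 1 - (i : ℕ))).natDegree = k := by
  refine natDegree_eq_of_degree_eq_some ((degree_sub_eq_left_of_degree_lt ?_).trans
    (degree_X_pow k))
  rw [degree_X_pow]
  refine (degree_sum_le _ _).trans_lt ((Finset.sup_lt_iff (WithBot.bot_lt_coe _)).2 fun i _ => ?_)
  exact (degree_C_mul_X_pow_le _ _).trans_lt (by exact_mod_cast (by omega : k - 1 - (i : ℕ) < k))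

theorem Polynomial.sum_eq_of_X_pow_sub_sum_eq_prod {R ι : Type*} [CommRing R] [IsDomain R]
    [Fintype ι] {k : ℕ} {c : Fin k → R} {α : ι → R} {mult : ι → ℕ}
    (h : X ^ k - ∑ i : Fin k, C (c i) * X ^ (k - 1 - (i : ℕ)) = ∏ i, (X - C (α i)) ^ mult i) :
    ∑ i, mult i = k := by
  have := congrArg natDegree h
  rw [natDegree_X_pow_sub_sum_C_mul_X_pow,
    natDegree_prod _ _ fun i _ => pow_ne_zero _ (X_sub_C_ne_zero _), eq_comm] at this
  simpa [natDegree_pow] using this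

theorem exists_norm_sub_le_of_eq_sum {𝕜 ι : Type*} [RCLike 𝕜] [Fintype ι] {u : ℕ → 𝕜}
    {α : ι → 𝕜} {f : ι → 𝕜[X]} {i₀ : ι} {η : 𝕜} {B : ℝ} {d : ℕ}
    (hu : ∀ n : ℕ, u n = ∑ i, (f i).eval (n : 𝕜) * α i ^ n) (hf : f i₀ = C η)
    (hdeg : ∀ i, (f i).natDegree ≤ d) (hB : ∀ j, j ≠ i₀ → ‖α j‖ ≤ B) :
    ∃ K : ℝ, 0 ≤ K ∧ ∀ n : ℕ, 1 ≤ n → ‖u n - η * α i₀ ^ n‖ ≤ K * n ^ d * B ^ n := by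
  classical
  choose K hK0 hK using fun i => (f i).exists_norm_eval_natCast_le (hdeg i)
  refine ⟨∑ i ∈ univ.erase i₀, K i, sum_nonneg fun i _ => hK0 i, fun n hn => ?_⟩
  rw [hu, ← add_sum_erase _ _ (mem_univ i₀), hf, eval_C, add_sub_cancel_left, sum_mul, sum_mul]
  refine (norm_sum_le _ _).trans (sum_le_sum fun i hi => ?_)
  rw [norm_mul, norm_pow]
  exact mul_le_mul (hK i n hn) (pow_le_pow_left₀ (norm_nonneg _) (hB i (ne_of_mem_erase hi)) n)
    (by positivity) (mul_nonneg (hK0 i) (by positivity))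

theorem Int.abs_cast_le_of_abs_cast_rpow_le {x : ℤ} {y ε : ℝ} (hε : 0 ≤ ε)
    (h : |(x : ℝ)| ^ (1 + ε) ≤ y) : |(x : ℝ)| ≤ y := by
  rcases eq_or_ne x 0 with rfl | hx
  · simpa [Real.zero_rpow (by linarith : 1 + ε ≠ 0)] using h
  · have hx1 : 1 ≤ |(x : ℝ)| := by exact_mod_cast Int.one_le_abs hx
    exact (Real.self_le_rpow_of_one_le hx1 (by linarith)).trans h

theorem sum_abs_cast_le_card_mul {ι : Type*} [Fintype ι] {z : ι → ℤ} {j : ι} {ε : ℝ}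
    (hε : 0 ≤ ε) (hz : ∀ i, i ≠ j → |(z i : ℝ)| ^ (1 + ε) ≤ |(z j : ℝ)|) :
    ∑ i, |(z i : ℝ)| ≤ Fintype.card ι * |(z j : ℝ)| := by
  refine (sum_le_card_nsmul univ _ |(z j : ℝ)| fun i _ => ?_).trans_eq (by simp)
  rcases eq_or_ne i j with rfl | hij
  · exact le_rfl
  · exact Int.abs_cast_le_of_abs_cast_rpow_le hε (hz i hij)

theorem sum_erase_le_card_sub_one_mul_rpow {ι : Type*} [Fintype ι] [DecidableEq ι] {x : ι → ℝ}
    {j : ι} {ε : ℝ} (hε : 0 ≤ ε) (hx : ∀ i, 0 ≤ x i) (h : ∀ i, i ≠ j → x i ^ (1 + ε) ≤ x j) :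
    ∑ i ∈ univ.erase j, x i ≤ (Fintype.card ι - 1 : ℝ) * x j ^ (1 + ε)⁻¹ := by
  refine (sum_le_card_nsmul _ _ (x j ^ (1 + ε)⁻¹) fun i hi => ?_).trans_eq ?_
  · exact (Real.le_rpow_inv_iff_of_pos (hx i) (hx j) (by linarith)).2 (h i (ne_of_mem_erase hi))
  · rw [card_erase_of_mem (mem_univ j), card_univ, nsmul_eq_mul,
      Nat.cast_sub (Fintype.card_pos_iff.2 ⟨j⟩), Nat.cast_one]

theorem div_le_mul_rpow_sub_one_add_div {X Z P s θ D : ℝ} (hP : 0 < P) (hPZ : P ≤ Z)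
    (hs : 0 ≤ s) (hθ : θ ≤ 1) (hD : 0 ≤ D) (hX : X ≤ s * Z ^ θ + D) :
    X / Z ≤ s * P ^ (θ - 1) + D / P := by
  have hZ : 0 < Z := hP.trans_le hPZ
  calc X / Z ≤ (s * Z ^ θ + D) / Z := by gcongr
    _ = s * Z ^ (θ - 1) + D / Z := by rw [Real.rpow_sub_one hZ.ne', add_div, mul_div_assoc]
    _ ≤ s * P ^ (θ - 1) + D / P :=
      add_le_add (mul_le_mul_of_nonneg_left (Real.rpow_le_rpow_of_nonpos hP hPZ (by linarith)) hs)
        (div_le_div_of_nonneg_left hD hP hPZ)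

theorem pow_le_pow_sub_of_le {x M : ℝ} (hx : 0 ≤ x) (hxM : x ≤ M) (hM : M ≤ 1) (n m : ℕ) :
    x ^ n ≤ M ^ (n - m) :=
  (pow_le_pow_left₀ hx hxM n).trans (pow_le_pow_of_le_one (hx.trans hxM) hM (Nat.sub_le n m))

/-- The paper's `M`, with `A = α₁` and `B = |α₂|`. -/
noncomputable def decayRate (A B ε : ℝ) : ℝ := max (max (1 / A) (A ^ (-(ε / (1 + ε))))) (B / A)

section decayRate

variable {A B ε : ℝ}

theorem decayRate_pos (hA : 0 < A) : 0 < decayRate A B ε :=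
  (one_div_pos.2 hA).trans_le ((le_max_left _ _).trans (le_max_left _ _))

theorem decayRate_le_one (hA : 1 ≤ A) (hBA : B ≤ A) (hε : 0 ≤ ε) : decayRate A B ε ≤ 1 := by
  have hA0 : 0 < A := one_pos.trans_le hA
  refine max_le (max_le ?_ ?_) ?_
  · exact div_le_one_of_le₀ hA hA0.le
  · exact Real.rpow_le_one_of_one_le_of_nonpos hA (neg_nonpos.2 (by positivity))
  · exact div_le_one_of_le₀ hBA hA0.le

theorem mul_pow_rpow_neg_le_decayRate_pow (hA : 1 ≤ A) (hBA : B ≤ A) (hε : 0 ≤ ε) {c : ℝ}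
    (hc : 0 ≤ c) (n m : ℕ) :
    (c * A ^ n) ^ (-(ε / (1 + ε))) ≤ c ^ (-(ε / (1 + ε))) * decayRate A B ε ^ (n - m) := by
  have hA0 : 0 ≤ A := zero_le_one.trans hA
  rw [Real.mul_rpow hc (pow_nonneg hA0 n), ← Real.rpow_pow_comm hA0]
  exact mul_le_mul_of_nonneg_left (pow_le_pow_sub_of_le (Real.rpow_nonneg hA0 _)
    ((le_max_right _ _).trans (le_max_left _ _)) (decayRate_le_one hA hBA hε) n m)
    (Real.rpow_nonneg hc _)

theorem pow_add_pow_div_le_two_mul_decayRate_pow (hA : 1 < A) (hB : 0 ≤ B) (hBA : B ≤ A)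
    (hε : 0 ≤ ε) {n m : ℕ} (hmn : m ≤ n) :
    (A ^ m + B ^ n) / A ^ n ≤ 2 * decayRate A B ε ^ (n - m) := by
  have hA0 : 0 < A := one_pos.trans hA
  have hAm : A ^ m / A ^ n = (1 / A) ^ (n - m) := by
    rw [div_pow, one_pow, pow_sub₀ A hA0.ne' hmn]
    field_simp
  have h1 : (1 / A) ^ (n - m) ≤ decayRate A B ε ^ (n - m) :=
    pow_le_pow_left₀ (by positivity) ((le_max_left _ _).trans (le_max_left _ _)) _
  have h2 : (B / A) ^ n ≤ decayRate A B ε ^ (n - m) :=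
    pow_le_pow_sub_of_le (by positivity) (le_max_right _ _) (decayRate_le_one hA.le hBA hε) n m
  rw [add_div, hAm, ← div_pow]
  linarith

end decayRate

theorem norm_le_of_norm_sub_mul_pow_le {x η : ℂ} {A B K : ℝ} {d m n : ℕ} (hm : 1 ≤ m) (hmn : m ≤ n)
    (hA : 0 < A) (hB : 0 ≤ B) (hBA : B ≤ A) (hK : 0 ≤ K)
    (h : ‖x - η * (A : ℂ) ^ m‖ ≤ K * m ^ d * B ^ m) :
    ‖x‖ ≤ (‖η‖ + K) * n ^ d * A ^ m := by
  have hnd : (1 : ℝ) ≤ n ^ d := one_le_pow₀ (by exact_mod_cast hm.trans hmn)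
  have hmd : (m : ℝ) ^ d ≤ n ^ d := by gcongr
  have hBm : B ^ m ≤ A ^ m := by gcongr
  have hηA : ‖η * (A : ℂ) ^ m‖ = ‖η‖ * A ^ m := by
    rw [norm_mul, norm_pow, Complex.norm_real, Real.norm_of_nonneg hA.le]
  calc ‖x‖ ≤ ‖η * (A : ℂ) ^ m‖ + ‖x - η * (A : ℂ) ^ m‖ := norm_le_insert' _ _
    _ ≤ ‖η‖ * A ^ m + K * n ^ d * A ^ m := by
      rw [hηA]
      gcongr
      exact h.trans (by gcongr)
    _ ≤ (‖η‖ + K) * n ^ d * A ^ m := by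
      nlinarith [mul_le_mul_of_nonneg_left hnd (mul_nonneg (norm_nonneg η) (pow_pos hA m).le)]

theorem div_card_lt_abs_of_lt_abs_sum {ι : Type*} [Fintype ι] {z : ι → ℤ} {j : ι} {ε Y : ℝ}
    (hε : 0 ≤ ε) (hz : ∀ i, i ≠ j → |(z i : ℝ)| ^ (1 + ε) ≤ |(z j : ℝ)|)
    (hY : Y < |∑ i, (z i : ℝ)|) :
    Y / Fintype.card ι < |(z j : ℝ)| := by
  have hr : (0 : ℝ) < Fintype.card ι := by exact_mod_cast Fintype.card_pos_iff.2 ⟨j⟩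
  rw [div_lt_iff₀' hr]
  exact hY.trans_le ((abs_sum_le_sum_abs _ _).trans (sum_abs_cast_le_card_mul hε hz))

theorem norm_mul_pow_sub_le_of_sum_eq {ι : Type*} [Fintype ι] {u : ℕ → ℂ} {A B ε K : ℝ}
    {η : ℂ} {d a b n m : ℕ} {z : ι → ℤ} {j : ι} (hA : 0 < A) (hB : 0 ≤ B) (hBA : B ≤ A)
    (hε : 0 ≤ ε) (hK : 0 ≤ K)
    (hu : ∀ N : ℕ, 1 ≤ N → ‖u N - η * (A : ℂ) ^ N‖ ≤ K * N ^ d * B ^ N)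
    (hm : 1 ≤ m) (hmn : m ≤ n) (hsum : (a : ℂ) * u n + b * u m = ∑ i, (z i : ℂ))
    (hz : ∀ i, i ≠ j → |(z i : ℝ)| ^ (1 + ε) ≤ |(z j : ℝ)|) :
    ‖(a : ℂ) * η * (A : ℂ) ^ n - z j‖
      ≤ (Fintype.card ι - 1) * |(z j : ℝ)| ^ (1 + ε)⁻¹
        + (b * (‖η‖ + K) + a * K) * n ^ d * (A ^ m + B ^ n) := by
  classical
  have hsplit : (a : ℂ) * η * (A : ℂ) ^ n - z j
      = ∑ i ∈ univ.erase j, (z i : ℂ) - b * u m - a * (u n - η * (A : ℂ) ^ n) := by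
    rw [← sum_erase_add _ _ (mem_univ j)] at hsum
    linear_combination hsum
  have hsmall : ‖∑ i ∈ univ.erase j, (z i : ℂ)‖
      ≤ (Fintype.card ι - 1) * |(z j : ℝ)| ^ (1 + ε)⁻¹ := by
    refine (norm_sum_le _ _).trans ?_
    simpa only [Complex.norm_intCast] using
      sum_erase_le_card_sub_one_mul_rpow hε (fun i => abs_nonneg (z i : ℝ)) hz
  have hum : ‖(b : ℂ) * u m‖ ≤ b * ((‖η‖ + K) * n ^ d * A ^ m) := by
    rw [norm_mul, Complex.norm_natCast]
    gcongr
    exact norm_le_of_norm_sub_mul_pow_le hm hmn hA hB hBA hK (hu m hm)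
  have hun : ‖(a : ℂ) * (u n - η * (A : ℂ) ^ n)‖ ≤ a * (K * n ^ d * B ^ n) := by
    rw [norm_mul, Complex.norm_natCast]
    gcongr
    exact hu n (hm.trans hmn)
  have hcross : 0 ≤ b * (‖η‖ + K) * n ^ d * B ^ n + a * K * n ^ d * A ^ m := by positivity
  rw [hsplit]
  refine (norm_sub_le _ _).trans ((add_le_add (norm_sub_le _ _) le_rfl).trans ?_)
  linear_combination hsmall + hum + hun + hcross

theorem exists_norm_mul_inv_sub_one_le {ι : Type*} [Fintype ι] {u : ℕ → ℂ} {A B ε K : ℝ}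
    {η : ℂ} {d : ℕ} (hA : 1 < A) (hB : 0 ≤ B) (hBA : B ≤ A) (hε : 0 ≤ ε) (hη : η ≠ 0)
    (hK : 0 ≤ K) (hu : ∀ N : ℕ, 1 ≤ N → ‖u N - η * (A : ℂ) ^ N‖ ≤ K * N ^ d * B ^ N)
    (a b : ℕ) :
    ∃ c : ℝ, ∀ (n m : ℕ) (z : ι → ℤ) (j : ι), 1 ≤ m → m ≤ n →
      (a : ℂ) * u n + b * u m = ∑ i, (z i : ℂ) →
      (∀ i, i ≠ j → |(z i : ℝ)| ^ (1 + ε) ≤ |(z j : ℝ)|) →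
      1 / 2 * ‖η‖ * A ^ n < |∑ i, (z i : ℝ)| →
      ‖(a : ℂ) * η * (A : ℂ) ^ n * (z j : ℂ)⁻¹ - 1‖ ≤ c * n ^ d * decayRate A B ε ^ (n - m) := by
  set r : ℕ := Fintype.card ι
  set σ := ε / (1 + ε)
  set c₀ := ‖η‖ / (2 * r)
  set L := b * (‖η‖ + K) + a * K
  refine ⟨(r - 1) * c₀ ^ (-σ) + 2 * L / c₀, fun n m z j hm hmn hsum hz hbig => ?_⟩
  set M := decayRate A B ε
  have hA0 : 0 < A := one_pos.trans hA
  have hr : (1 : ℝ) ≤ r := by exact_mod_cast Fintype.card_pos_iff.2 ⟨j⟩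
  have hc₀ : 0 < c₀ := by positivity
  have hPZ : c₀ * A ^ n < |(z j : ℝ)| := by
    convert div_card_lt_abs_of_lt_abs_sum hε hz hbig using 1
    ring
  have hzj : (z j : ℂ) ≠ 0 := by
    exact_mod_cast abs_pos.1 ((mul_pos hc₀ (pow_pos hA0 n)).trans hPZ)
  have hexp : (1 + ε)⁻¹ - 1 = -σ := by
    simp only [σ]
    field_simp
    ring
  have hnd : (1 : ℝ) ≤ n ^ d := one_le_pow₀ (by exact_mod_cast hm.trans hmn)
  have hM : 0 ≤ M ^ (n - m) := pow_nonneg (decayRate_pos hA0).le _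
  calc ‖(a : ℂ) * η * (A : ℂ) ^ n * (z j : ℂ)⁻¹ - 1‖
      = ‖(a : ℂ) * η * (A : ℂ) ^ n - z j‖ / |(z j : ℝ)| := by
        rw [← Complex.norm_intCast, ← norm_div, sub_div, div_self hzj, div_eq_mul_inv]
    _ ≤ (r - 1) * (c₀ * A ^ n) ^ (-σ) + L * n ^ d / c₀ * ((A ^ m + B ^ n) / A ^ n) := by
        refine (div_le_mul_rpow_sub_one_add_div (by positivity) hPZ.le (by linarith)
          (inv_le_one_of_one_le₀ (by linarith)) (by positivity)
          (norm_mul_pow_sub_le_of_sum_eq hA0 hB hBA hε hK hu hm hmn hsum hz)).trans_eq ?_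
        rw [hexp]
        ring
    _ ≤ (r - 1) * (c₀ ^ (-σ) * M ^ (n - m)) + L * n ^ d / c₀ * (2 * M ^ (n - m)) := by
        gcongr ?_ + _ * ?_
        · exact mul_le_mul_of_nonneg_left
            (mul_pow_rpow_neg_le_decayRate_pow hA.le hBA hε hc₀.le n m) (by linarith)
        · exact pow_add_pow_div_le_two_mul_decayRate_pow hA hB hBA hε hmn
    _ ≤ ((r - 1) * c₀ ^ (-σ) + 2 * L / c₀) * n ^ d * M ^ (n - m) := by
        have hc : 0 ≤ (r - 1 : ℝ) * c₀ ^ (-σ) := mul_nonneg (by linarith) (by positivity)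
        have := mul_le_mul_of_nonneg_left hnd (mul_nonneg hc hM)
        field_simp
        nlinarith

end

theorem Phi1_upper_bound
    (k t : ℕ) (ht : 0 < t)
    (c : Fin k → ℤ)
    (U : ℕ → ℤ)
    (α : Fin t → ℂ)
    (mult : Fin t → ℕ)
    (hchar : (Polynomial.X ^ k -
        ∑ i : Fin k, Polynomial.C ((c i : ℂ)) * Polynomial.X ^ (k - 1 - (i : ℕ)))
      = ∏ i : Fin t, (Polynomial.X - Polynomial.C (α i)) ^ (mult i))
    (f : Fin t → Polynomial ℂ)
    (hfdeg : ∀ i, (f i).natDegree < mult i)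
    (hrep : ∀ n : ℕ, (U n : ℂ) = ∑ i : Fin t, (f i).eval (n : ℂ) * α i ^ n)
    (A : ℝ) (hA : (A : ℂ) = α ⟨0, ht⟩) (hA1 : 1 < A)
    (hdom : ∀ j : Fin t, j ≠ ⟨0, ht⟩ → ‖α j‖ < A)
    (η : ℂ) (hη : η ≠ 0) (hf1 : f ⟨0, ht⟩ = Polynomial.C η)
    (ht2 : 2 ≤ t)
    (hmax2 : ∀ j : Fin t, j ≠ ⟨0, ht⟩ → ‖α j‖ ≤ ‖α ⟨1, by omega⟩‖)
    (L : ℕ) (p : Fin L → ℕ)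
    (a b : ℕ)
    (ε : ℝ) (hε : 0 < ε) (r : ℕ) (hr : 1 ≤ r) :
    ∃ c₁₂ : ℝ, ∀ (n m : ℕ) (z : Fin r → ℤ),
      1 ≤ m → m ≤ n →
      (∀ i, IsSUnit p (z i)) →
      ((a : ℤ) * U n + (b : ℤ) * U m = ∑ i, z i) →
      (∀ i : Fin r, (i : ℕ) < r - 1 →
        ((|z i| : ℝ)) ^ (1 + ε) ≤ ((|z ⟨r - 1, by omega⟩| : ℝ))) →
      ((|(a : ℤ) * U n + (b : ℤ) * U m| : ℝ)) > (1 / 2) * ‖η‖ * A ^ n →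
      ‖(a : ℂ) * η * (A : ℂ) ^ n * ((z ⟨r - 1, by omega⟩ : ℤ) : ℂ)⁻¹ - 1‖
        < c₁₂ * (n : ℝ) ^ (k - 1) *
          (max (max (1 / A) (A ^ (-(ε / (1 + ε))))) (‖α ⟨1, by omega⟩‖ / A)) ^ (n - m) := by
  have hBA : ‖α ⟨1, by omega⟩‖ ≤ A := (hdom _ (by simp [Fin.ext_iff])).le
  have hdeg : ∀ i, (f i).natDegree ≤ k - 1 := fun i => Nat.le_sub_one_of_lt <|
    (hfdeg i).trans_le <| (Finset.single_le_sum (fun j _ => Nat.zero_le (mult j))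
      (Finset.mem_univ i)).trans_eq (Polynomial.sum_eq_of_X_pow_sub_sum_eq_prod hchar)
  obtain ⟨K, hK, hR⟩ := exists_norm_sub_le_of_eq_sum hrep hf1 hdeg hmax2
  rw [← hA] at hR
  obtain ⟨C, hC⟩ := exists_norm_mul_inv_sub_one_le (ι := Fin r) hA1 (norm_nonneg _) hBA hε.le hη
    hK hR a b
  refine ⟨C + 1, fun n m z hm hmn _ hsum hsmall hbig => ?_⟩
  have hz : ∀ i, i ≠ ⟨r - 1, by omega⟩ → |(z i : ℝ)| ^ (1 + ε) ≤ |(z ⟨r - 1, by omega⟩ : ℝ)| :=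
    fun i hi => hsmall i ((Nat.le_sub_one_of_lt i.isLt).lt_of_ne fun h => hi (Fin.ext h))
  have hsumR : (a : ℝ) * U n + b * U m = ∑ i, (z i : ℝ) := by exact_mod_cast hsum
  have hbigR : 1 / 2 * ‖η‖ * A ^ n < |∑ i, (z i : ℝ)| := by
    rw [← hsumR]
    exact_mod_cast hbig
  have hpos : 0 < (n : ℝ) ^ (k - 1) * decayRate A ‖α ⟨1, by omega⟩‖ ε ^ (n - m) :=
    mul_pos (pow_pos (by exact_mod_cast hm.trans hmn) _)
      (pow_pos (decayRate_pos (one_pos.trans hA1)) _)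
  calc _ ≤ C * n ^ (k - 1) * decayRate A ‖α ⟨1, by omega⟩‖ ε ^ (n - m) :=
        hC n m z _ hm hmn (by exact_mod_cast hsum) hz hbigR
    _ < (C + 1) * n ^ (k - 1) * decayRate A ‖α ⟨1, by omega⟩‖ ε ^ (n - m) := by nlinarith
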